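/- Let X be a pure k-dimensional complex on n vertices with complete (k-1)-skeleton, and let Ā be the adjacency matrix of the complementary complex X̄. Then ϑ_k(X) ≥ k·(1 + (k+1)·|X̄_k| / (−binom(n,k)·λ_min(Ā))), provided λ_min(Ā) < 0. -/

import Mathlib

open Finset Matrix

/-- The oriented incidence number `[F:K]` induced by the global linear order on
the vertices: it is `(-1)^j` if `K ⊆ F`, `F ∖ K = {x_j}` and `x_j` is the `j`-th
smallest element of `F`, and `0` otherwise. -/
def inc {V : Type} [DecidableEq V] [LinearOrder V] (F K : Finset V) : ℝ :=
  if K ⊆ F ∧ F.card = K.card + 1 then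
    ∑ x ∈ F \ K, (-1 : ℝ) ^ (K.filter (fun y => y < x)).card
  else 0

/-- An abstract simplicial complex on a vertex type `V`: a family of finite subsets
of `V` closed under taking subsets. -/
structure SC (V : Type) [DecidableEq V] where
  faces : Finset (Finset V)
  down_closed : ∀ ⦃F⦄, F ∈ faces → ∀ ⦃K : Finset V⦄, K ⊆ F → K ∈ faces

variable {V : Type} [Fintype V] [DecidableEq V] [LinearOrder V]

/-- The faces of cardinality `m` (i.e. of dimension `m-1`) of a complex. -/
def SC.dfaces (X : SC V) (m : ℕ) : Finset (Finset V) := X.faces.filter fun F => F.card = m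

/-- The faces of cardinality `m`, as a type (index set of the space `C^{m-1}` of
`(m-1)`-dimensional cochains). -/
abbrev Face (X : SC V) (m : ℕ) := {F : Finset V // F ∈ X.dfaces m}

/-- The matrix of the coboundary map `δ_{m-1}` from `(m-1)`-dimensional cochains
(functions on cardinality-`m` faces) to `m`-dimensional cochains, in the bases of
elementary cochains. -/
def deltaMat (X : SC V) (m : ℕ) : Matrix (Face X (m + 1)) (Face X m) ℝ :=
  fun H F => inc H.1 F.1

/-- The up-Laplacian `L↑_{m-1} = ∂_m δ_{m-1}` acting on `(m-1)`-dimensional cochains,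
where `∂ = δ*` is the adjoint (transpose) of the coboundary map. -/
def Lup (X : SC V) (m : ℕ) : Matrix (Face X m) (Face X m) ℝ :=
  (deltaMat X m)ᵀ * deltaMat X m

/-- The down-Laplacian `L↓_m = δ_{m-1} ∂_m` acting on `m`-dimensional cochains. -/
def Ldown (X : SC V) (m : ℕ) : Matrix (Face X (m + 1)) (Face X (m + 1)) ℝ :=
  deltaMat X m * (deltaMat X m)ᵀ

/-- The space of harmonicSp `i`-cochains `H_i = Z_i ∩ Z^i = ker ∂_i ∩ ker δ_i`. -/
def harmonicSp (X : SC V) (i : ℕ) : Submodule ℝ (Face X (i + 1) → ℝ) :=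
  LinearMap.ker (Matrix.mulVecLin (deltaMat X i)ᵀ) ⊓
    LinearMap.ker (Matrix.mulVecLin (deltaMat X (i + 1)))

/-- The type of all `k`-element subsets of `V`. -/
abbrev KSet (V : Type) [Fintype V] [DecidableEq V] (k : ℕ) := {F : Finset V // F.card = k}

/-- `ε_{F,F'} = [F : F ∩ F'] ⬝ [F' : F ∩ F']`. -/
def eps {V : Type} [DecidableEq V] [LinearOrder V] (F F' : Finset V) : ℝ :=
  inc F (F ∩ F') * inc F' (F ∩ F')

/-- The down-Laplacian `L↓_{k-1}` of the complete complex `K_n^k`, as a matrix indexed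
by all `k`-subsets of the vertex set: diagonal entries `k`, off-diagonal entries
`ε_{F,F'}` (which vanish unless `|F ∩ F'| = k-1`). -/
def Lc (V : Type) [Fintype V] [DecidableEq V] [LinearOrder V] (k : ℕ) :
    Matrix (KSet V k) (KSet V k) ℝ :=
  fun F F' => if F = F' then (k : ℝ) else eps F.1 F'.1

/-- `S` is an independent set of the pure `k`-dimensional complex `X`: it contains
no `k`-dimensional face of `X`. -/
def SC.IsIndep (X : SC V) (k : ℕ) (S : Finset V) : Prop :=
  ∀ H ∈ X.dfaces (k + 1), ¬ H ⊆ S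

/-- The independence number `α(X)` of a pure `k`-dimensional complex. -/
noncomputable def alphaNum (X : SC V) (k : ℕ) : ℕ :=
  sSup {m | ∃ S : Finset V, X.IsIndep k S ∧ S.card = m}

/-- `X` is a pure `k`-dimensional simplicial complex: all faces have dimension at
most `k` and every face is contained in a face of dimension `k`. -/
def SC.Pure (X : SC V) (k : ℕ) : Prop :=
  (∀ F ∈ X.faces, F.card ≤ k + 1) ∧ ∀ F ∈ X.faces, ∃ H ∈ X.dfaces (k + 1), F ⊆ H

/-- Feasibility for the primal semidefinite program defining `ϑ_k(X)`. -/
def thetaFeasible (X : SC V) (k : ℕ) (Y : Matrix (KSet V k) (KSet V k) ℝ) : Prop :=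
  Y.PosSemidef ∧ Matrix.trace Y = 1 ∧
  (∀ F F' : KSet V k, F.1 ∪ F'.1 ∈ X.dfaces (k + 1) → Y F F' = 0) ∧
  (∀ F F' : KSet V k, k + 2 ≤ (F.1 ∪ F'.1).card → Y F F' = 0) ∧
  (∀ F F' G G' : KSet V k, F.1 ∪ F'.1 = G.1 ∪ G'.1 →
    eps F.1 F'.1 * Y F F' = eps G.1 G'.1 * Y G G')

/-- The theta number `ϑ_k(X)` of a pure `k`-dimensional simplicial complex: the optimal
value of the semidefinite program maximizing `⟨L↓_{k-1}, Y⟩` over feasible `Y`. -/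
noncomputable def theta (X : SC V) (k : ℕ) : ℝ :=
  sSup {t | ∃ Y, thetaFeasible X k Y ∧ Matrix.trace (Lc V k * Y) = t}

/-- The complete `k`-dimensional complex on the vertex type `V`: all subsets of
cardinality at most `k+1` are faces. -/
def completeComplex (V : Type) [Fintype V] [DecidableEq V] (k : ℕ) : SC V :=
  ⟨univ.filter fun F => F.card ≤ k + 1, by
    intro F hF K hK
    simp only [mem_filter, mem_univ, true_and] at hF ⊢
    exact le_trans (card_le_card hK) hF⟩

/-- The empty complex (no faces at all), conventionally pure of any dimension. -/
def emptyComplex (V : Type) [DecidableEq V] : SC V :=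
  ⟨∅, by intro F hF; simp at hF⟩

/-- The largest eigenvalue of a matrix. -/
noncomputable def lambdaMax {ι : Type} [Fintype ι] (M : Matrix ι ι ℝ) : ℝ :=
  sSup {μ : ℝ | Module.End.HasEigenvalue (Matrix.mulVecLin M) μ}

/-- The smallest eigenvalue of a matrix. -/
noncomputable def lambdaMin {ι : Type} [Fintype ι] (M : Matrix ι ι ℝ) : ℝ :=
  sInf {μ : ℝ | Module.End.HasEigenvalue (Matrix.mulVecLin M) μ}

/-- The degree of a face `F`: the number of faces of one higher dimension containing it. -/
def SC.deg (X : SC V) (F : Finset V) : ℕ :=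
  ((X.dfaces (F.card + 1)).filter fun H => F ⊆ H).card

/-- The minimal degree of a `(k-1)`-dimensional face (a face of cardinality `k`). -/
noncomputable def degMin (X : SC V) (k : ℕ) : ℕ :=
  sInf {m | ∃ F ∈ X.dfaces k, m = X.deg F}

/-- The up-Laplacian `L↑_{k-1}(X)` extended by zeros to a matrix indexed by all
`k`-subsets of the vertex set. -/
def LupE (X : SC V) (k : ℕ) : Matrix (KSet V k) (KSet V k) ℝ :=
  fun F F' => ∑ H ∈ X.dfaces (k + 1), inc H F.1 * inc H F'.1

/-- The down-Laplacian `L↓_{k-1}(X)` extended by zeros to a matrix indexed by all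
`k`-subsets of the vertex set. -/
def LdownE (X : SC V) (k : ℕ) : Matrix (KSet V k) (KSet V k) ℝ :=
  fun F F' =>
    if F.1 ∈ X.faces ∧ F'.1 ∈ X.faces then ∑ K ∈ X.dfaces (k - 1), inc F.1 K * inc F'.1 K
    else 0

/-- The Lovász theta number of a graph given by an adjacency relation `adj` on a finite
vertex type, in its primal formulation. -/
noncomputable def thetaG {W : Type} [Fintype W] (adj : W → W → Prop) : ℝ :=
  sSup {t | ∃ Z : Matrix W W ℝ, Z.PosSemidef ∧ Matrix.trace Z = 1 ∧
    (∀ v w, adj v w → Z v w = 0) ∧ t = ∑ v, ∑ w, Z v w}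

/-- The adjacency matrix of the complementary complex `X̄` of a pure `k`-dimensional
complex `X`, indexed by all `k`-subsets: `Ā_{F,F'} = ε_{F,F'}` if `F ∪ F'` is a
`(k+1)`-set that is not a face of `X`, and `0` otherwise. -/
def adjCompl (X : SC V) (k : ℕ) : Matrix (KSet V k) (KSet V k) ℝ :=
  fun F F' =>
    if (F.1 ∪ F'.1).card = k + 1 ∧ F.1 ∪ F'.1 ∉ X.faces then eps F.1 F'.1 else 0

/-! The matrix `Ā - λ_min(Ā) I` is positive semidefinite with trace `-binom(n,k) λ_min(Ā)`,
since the diagonal of `Ā` vanishes. Its off-diagonal entries vanish unless `F ∪ F' ∈ X̄_k`, and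
as `ε_{F,F'}² = 1` whenever `|F ∪ F'| = k + 1`, the product `ε_{F,F'} Ā_{F,F'}` is the
indicator of `F ∪ F' ∈ X̄_k`, a function of `F ∪ F'` alone. Hence the matrix, normalised to
trace one, is feasible for `ϑ_k(X)`. Its objective value follows from `⟨L↓, I⟩ = k binom(n,k)`
and `⟨L↓, Ā⟩ = (k+1) k |X̄_k|`, each `H ∈ X̄_k` being the union of exactly `(k+1) k` ordered
pairs of distinct `k`-subsets. -/

section RealMatrix

variable {ι : Type} [Fintype ι] [DecidableEq ι]

lemma lambdaMin_eq_sInf_spectrum (M : Matrix ι ι ℝ) : lambdaMin M = sInf (spectrum ℝ M) := by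
  rw [lambdaMin]
  congr 1
  ext μ
  rw [Set.mem_ofPred_eq, Module.End.hasEigenvalue_iff_mem_spectrum, ← Matrix.toLin'_apply',
    Matrix.spectrum_toLin']

open scoped MatrixOrder in
lemma posSemidef_sub_lambdaMin_smul_one {M : Matrix ι ι ℝ} (hM : M.IsHermitian) :
    (M - lambdaMin M • (1 : Matrix ι ι ℝ)).PosSemidef := by
  rw [← Matrix.le_iff, ← Algebra.algebraMap_eq_smul_one,
    algebraMap_le_iff_le_spectrum hM.isSelfAdjoint, lambdaMin_eq_sInf_spectrum]
  exact fun μ hμ => csInf_le M.finite_spectrum.bddBelow hμ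

lemma Matrix.PosSemidef.abs_apply_le_trace {Z : Matrix ι ι ℝ} (hZ : Z.PosSemidef) (i j : ι) :
    |Z i j| ≤ Z.trace := by
  obtain rfl | hij := eq_or_ne i j
  · exact (abs_of_nonneg hZ.diag_nonneg).trans_le
      (Finset.single_le_sum (f := Z.diag) (fun m _ => hZ.diag_nonneg) (Finset.mem_univ i))
  have hpair : Z i i + Z j j ≤ Z.trace := by
    have := Finset.sum_le_sum_of_subset_of_nonneg (f := Z.diag) (Finset.subset_univ {i, j})
      fun l _ _ => hZ.diag_nonneg
    rwa [Finset.sum_pair hij] at this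
  have hsymm : Z j i = Z i j := by simpa using hZ.isHermitian.apply i j
  have hquad : ∀ s : ℝ, 0 ≤ Z i i + 2 * s * Z i j + s ^ 2 * Z j j := fun s => by
    have h := hZ.dotProduct_mulVec_nonneg (Pi.single i 1 + s • Pi.single j 1)
    simp only [star_trivial, Matrix.mulVec_add, Matrix.mulVec_single, MulOpposite.op_one,
      one_smul, Matrix.mulVec_smul, dotProduct_add, add_dotProduct, single_dotProduct,
      Matrix.col_apply, one_mul, smul_dotProduct, hsymm, smul_eq_mul, dotProduct_smul] at h
    linear_combination h
  have h1 := hquad 1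
  have h2 := hquad (-1)
  rw [abs_le]
  constructor <;> linarith [hZ.diag_nonneg (i := i), hZ.diag_nonneg (i := j)]

lemma trace_mul_le_of_posSemidef (B : Matrix ι ι ℝ) {Z : Matrix ι ι ℝ} (hZ : Z.PosSemidef) :
    (B * Z).trace ≤ (∑ i, ∑ j, |B i j|) * Z.trace := by
  simp only [Matrix.trace, Matrix.diag, Matrix.mul_apply, Finset.sum_mul]
  refine Finset.sum_le_sum fun i _ => Finset.sum_le_sum fun j _ => ?_
  calc B i j * Z j i ≤ |B i j| * |Z j i| := (le_abs_self _).trans (abs_mul _ _).le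
    _ ≤ |B i j| * ∑ l, Z l l := mul_le_mul_of_nonneg_left (hZ.abs_apply_le_trace j i) (abs_nonneg _)

end RealMatrix

lemma Finset.card_lt_card_union_of_ne {α : Type*} [DecidableEq α] {s t : Finset α}
    (hst : s.card = t.card) (hne : s ≠ t) : s.card < (s ∪ t).card := by
  refine Finset.card_lt_card (Finset.ssubset_iff_subset_ne.mpr ⟨Finset.subset_union_left, ?_⟩)
  intro h
  have hts : t ⊆ s := h ▸ Finset.subset_union_right
  exact hne (Finset.eq_of_subset_of_card_le hts hst.le).symm

section Orientation

variable {α : Type} [DecidableEq α] [LinearOrder α]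

lemma inc_mul_self {F K : Finset α} (hKF : K ⊆ F) (hcard : F.card = K.card + 1) :
    inc F K * inc F K = 1 := by
  obtain ⟨x, hx⟩ : ∃ x, F \ K = {x} :=
    Finset.card_eq_one.mp (by rw [Finset.card_sdiff_of_subset hKF, hcard]; omega)
  rw [inc, if_pos ⟨hKF, hcard⟩, hx, Finset.sum_singleton, ← pow_add, ← two_mul, pow_mul]
  norm_num

lemma eps_comm (F F' : Finset α) : eps F F' = eps F' F := by
  rw [eps, eps, Finset.inter_comm, mul_comm]

lemma eps_self (F : Finset α) : eps F F = 0 := by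
  simp [eps, inc]

lemma eps_mul_self {F F' : Finset α} {k : ℕ} (hF : F.card = k) (hF' : F'.card = k)
    (hU : (F ∪ F').card = k + 1) : eps F F' * eps F F' = 1 := by
  have hsum := Finset.card_inter_add_card_union F F'
  calc eps F F' * eps F F'
      = (inc F (F ∩ F') * inc F (F ∩ F')) * (inc F' (F ∩ F') * inc F' (F ∩ F')) := by
        rw [eps]; ring
    _ = 1 := by
        rw [inc_mul_self Finset.inter_subset_left (by omega),
          inc_mul_self Finset.inter_subset_right (by omega), one_mul]

end Orientation

section Counting

variable {α : Type} [Fintype α] [DecidableEq α]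

/-- `X̄_k`, the `k`-faces of the complementary complex. -/
def complFaces (X : SC α) (k : ℕ) : Finset (Finset α) :=
  univ.filter fun H => H.card = k + 1 ∧ H ∉ X.faces

lemma ne_of_lt_card_union {k : ℕ} {F F' : KSet α k} (h : k < (F.1 ∪ F'.1).card) : F ≠ F' := by
  rintro rfl
  rw [Finset.union_self, F.2] at h
  exact lt_irrefl k h

lemma card_filter_union_eq {k : ℕ} {H : Finset α} (hH : H.card = k + 1) :
    #{p : KSet α k × KSet α k | p.1.1 ∪ p.2.1 = H} = (k + 1) * k := by
  have hpairs : ((H.powersetCard k).offDiag).card = (k + 1) * k := by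
    rw [Finset.offDiag_card, Finset.card_powersetCard, hH, Nat.choose_succ_self_right,
      ← Nat.mul_sub_one, Nat.add_sub_cancel]
  rw [← hpairs]
  refine Finset.card_bij (fun p _ => (p.1.1, p.2.1)) ?_ ?_ ?_
  · rintro ⟨F, F'⟩ hp
    simp only [Finset.mem_filter, Finset.mem_univ, true_and] at hp
    simp only [Finset.mem_offDiag, Finset.mem_powersetCard]
    refine ⟨⟨hp ▸ Finset.subset_union_left, F.2⟩, ⟨hp ▸ Finset.subset_union_right, F'.2⟩,
      fun h => ne_of_lt_card_union (by rw [hp, hH]; omega) (Subtype.ext h)⟩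
  · rintro ⟨F, F'⟩ - ⟨G, G'⟩ - h
    simp only [Prod.mk.injEq] at h
    exact Prod.ext (Subtype.ext h.1) (Subtype.ext h.2)
  · rintro ⟨F, F'⟩ hq
    simp only [Finset.mem_offDiag, Finset.mem_powersetCard] at hq
    obtain ⟨⟨hFH, hF⟩, ⟨hF'H, hF'⟩, hne⟩ := hq
    refine ⟨(⟨F, hF⟩, ⟨F', hF'⟩), ?_, rfl⟩
    simp only [Finset.mem_filter, Finset.mem_univ, true_and]
    refine Finset.eq_of_subset_of_card_le (Finset.union_subset hFH hF'H) ?_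
    have := Finset.card_lt_card_union_of_ne (hF.trans hF'.symm) hne
    omega

lemma card_filter_union_mem {k : ℕ}
    {S : Finset (Finset α)} (hS : ∀ H ∈ S, H.card = k + 1) :
    #{p : KSet α k × KSet α k | p.1.1 ∪ p.2.1 ∈ S} = #S * ((k + 1) * k) := by
  rw [Finset.card_eq_sum_card_fiberwise (f := fun p : KSet α k × KSet α k => p.1.1 ∪ p.2.1)
    (s := {p | p.1.1 ∪ p.2.1 ∈ S}) (t := S) fun p hp => (Finset.mem_filter.mp hp).2]
  refine Finset.sum_const_nat fun H hH => ?_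
  rw [Finset.filter_filter, ← card_filter_union_eq (hS H hH)]
  congr 1
  exact Finset.filter_congr fun p _ => and_iff_right_of_imp fun h => h ▸ hH

lemma notMem_complFaces_of_card (X : SC α) {k : ℕ} {F : Finset α} (hF : F.card = k) :
    F ∉ complFaces X k := by
  simp [complFaces, hF]

end Counting

section Complement

variable (X : SC V) (k : ℕ)

lemma adjCompl_apply (F F' : KSet V k) :
    adjCompl X k F F' = if F.1 ∪ F'.1 ∈ complFaces X k then eps F.1 F'.1 else 0 := by
  simp [adjCompl, complFaces]

lemma adjCompl_comm (F F' : KSet V k) : adjCompl X k F F' = adjCompl X k F' F := by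
  simp only [adjCompl_apply, Finset.union_comm F.1, eps_comm F.1]

lemma adjCompl_isHermitian : (adjCompl X k).IsHermitian := by
  ext F F'
  rw [Matrix.conjTranspose_apply, star_trivial, adjCompl_comm]

lemma adjCompl_apply_self (F : KSet V k) : adjCompl X k F F = 0 := by
  rw [adjCompl_apply, Finset.union_self, if_neg (notMem_complFaces_of_card X F.2)]

lemma trace_adjCompl : (adjCompl X k).trace = 0 :=
  Finset.sum_eq_zero fun F _ => adjCompl_apply_self X k F

lemma eps_mul_adjCompl_apply (F F' : KSet V k) :
    eps F.1 F'.1 * adjCompl X k F F' = if F.1 ∪ F'.1 ∈ complFaces X k then 1 else 0 := by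
  rw [adjCompl_apply]
  split_ifs with hH
  · exact eps_mul_self F.2 F'.2 (Finset.mem_filter.mp hH).2.1
  · exact mul_zero _

lemma Lc_mul_adjCompl_apply (F F' : KSet V k) :
    Lc V k F F' * adjCompl X k F' F = if F.1 ∪ F'.1 ∈ complFaces X k then 1 else 0 := by
  obtain rfl | hne := eq_or_ne F F'
  · rw [adjCompl_apply_self, mul_zero, Finset.union_self,
      if_neg (notMem_complFaces_of_card X F.2)]
  · rw [Lc, if_neg hne, ← adjCompl_comm, eps_mul_adjCompl_apply]

lemma adjCompl_sub_smul_one_apply_of_ne (μ : ℝ) {F F' : KSet V k} (hne : F ≠ F')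
    (hH : F.1 ∪ F'.1 ∉ complFaces X k) : (adjCompl X k - μ • 1) F F' = 0 := by
  simp [Matrix.one_apply_ne hne, adjCompl_apply, hH]

lemma eps_mul_adjCompl_sub_smul_one_apply (μ : ℝ) (F F' : KSet V k) :
    eps F.1 F'.1 * (adjCompl X k - μ • 1) F F' =
      if F.1 ∪ F'.1 ∈ complFaces X k then 1 else 0 := by
  obtain rfl | hne := eq_or_ne F F'
  · rw [eps_self, zero_mul, Finset.union_self, if_neg (notMem_complFaces_of_card X F.2)]
  · rw [Matrix.sub_apply, Matrix.smul_apply, Matrix.one_apply_ne hne, smul_zero, sub_zero,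
      eps_mul_adjCompl_apply]

lemma trace_adjCompl_sub_smul_one (μ : ℝ) :
    (adjCompl X k - μ • 1).trace = -((Fintype.card V).choose k : ℝ) * μ := by
  rw [Matrix.trace_sub, Matrix.trace_smul, Matrix.trace_one, trace_adjCompl,
    Fintype.card_finset_len, smul_eq_mul]
  ring

lemma trace_Lc_mul_adjCompl :
    (Lc V k * adjCompl X k).trace = #(complFaces X k) * ((k + 1) * k) := by
  have hcard : ∀ H ∈ complFaces X k, H.card = k + 1 := fun H hH => (Finset.mem_filter.mp hH).2.1
  simp only [Matrix.trace, Matrix.diag, Matrix.mul_apply, Lc_mul_adjCompl_apply]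
  rw [← Fintype.sum_prod_type', Finset.sum_boole]
  exact_mod_cast card_filter_union_mem hcard

lemma trace_Lc : (Lc V k).trace = (Fintype.card V).choose k * k := by
  simp [Matrix.trace, Lc, Fintype.card_finset_len]

end Complement

section Theta

variable (X : SC V) (k : ℕ)

lemma le_theta {Y : Matrix (KSet V k) (KSet V k) ℝ} (hY : thetaFeasible X k Y) :
    (Lc V k * Y).trace ≤ theta X k := by
  refine le_csSup ⟨∑ F, ∑ F', |Lc V k F F'|, ?_⟩ ⟨Y, hY, rfl⟩
  rintro t ⟨Z, ⟨hZ, htrace, -⟩, rfl⟩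
  simpa [htrace] using trace_mul_le_of_posSemidef (Lc V k) hZ

lemma thetaFeasible_adjCompl (hN : 0 < (Fintype.card V).choose k)
    (hmin : lambdaMin (adjCompl X k) < 0) :
    thetaFeasible X k ((-((Fintype.card V).choose k : ℝ) * lambdaMin (adjCompl X k))⁻¹ •
      (adjCompl X k - lambdaMin (adjCompl X k) • 1)) := by
  set μ := lambdaMin (adjCompl X k)
  set c := -((Fintype.card V).choose k : ℝ) * μ
  have hc : 0 < c := mul_pos_of_neg_of_neg (neg_neg_of_pos (by exact_mod_cast hN)) hmin
  have hoff : ∀ F F' : KSet V k, k < (F.1 ∪ F'.1).card → F.1 ∪ F'.1 ∉ complFaces X k →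
      (c⁻¹ • (adjCompl X k - μ • 1)) F F' = 0 := fun F F' hcard hH => by
    rw [Matrix.smul_apply,
      adjCompl_sub_smul_one_apply_of_ne X k μ (ne_of_lt_card_union hcard) hH, smul_zero]
  refine ⟨(posSemidef_sub_lambdaMin_smul_one (adjCompl_isHermitian X k)).smul
    (inv_nonneg.mpr hc.le), ?_, ?_, ?_, ?_⟩
  · rw [Matrix.trace_smul, trace_adjCompl_sub_smul_one, smul_eq_mul, inv_mul_cancel₀ hc.ne']
  · intro F F' hH
    obtain ⟨hface, hcard⟩ := Finset.mem_filter.mp hH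
    exact hoff F F' (by omega) fun h => (Finset.mem_filter.mp h).2.2 hface
  · intro F F' hcard
    exact hoff F F' (by omega) fun h => by rw [(Finset.mem_filter.mp h).2.1] at hcard; omega
  · intro F F' G G' hunion
    simp only [Matrix.smul_apply, smul_eq_mul, mul_left_comm _ c⁻¹,
      eps_mul_adjCompl_sub_smul_one_apply, hunion]

end Theta

theorem theta_lower_bound_complement_general
    {V : Type} [Fintype V] [DecidableEq V] [LinearOrder V] (X : SC V) (k : ℕ)
    (hkn : k ≤ Fintype.card V)
    (hmin : lambdaMin (adjCompl X k) < 0) :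
    (k : ℝ) * (1 + ((k : ℝ) + 1) *
        ((univ.filter fun H : Finset V => H.card = k + 1 ∧ H ∉ X.faces).card : ℝ) /
        (-(((Fintype.card V).choose k : ℕ) : ℝ) * lambdaMin (adjCompl X k))) ≤
      theta X k := by
  have hN := Nat.choose_pos hkn
  refine le_of_eq_of_le ?_ (le_theta X k (thetaFeasible_adjCompl X k hN hmin))
  rw [Matrix.mul_smul, Matrix.mul_sub, Matrix.mul_smul, Matrix.mul_one, Matrix.trace_smul,
    Matrix.trace_sub, Matrix.trace_smul, trace_Lc_mul_adjCompl, trace_Lc, complFaces,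
    smul_eq_mul, smul_eq_mul]
  have hNR : ((Fintype.card V).choose k : ℝ) ≠ 0 := by exact_mod_cast hN.ne'
  field_simp [hmin.ne]
  ring

/-- For a pure `k`-dimensional complex `X` on `n` vertices with
complete `(k-1)`-skeleton, and `Ā` the adjacency matrix of the complementary complex
`X̄`, one has `ϑ_k(X) ≥ k(1 + (k+1)|X̄_k|/(−binom(n,k)·λ_min(Ā)))`, provided
`λ_min(Ā) < 0`. -/
theorem theta_lower_bound_complement
    {V : Type} [Fintype V] [DecidableEq V] [LinearOrder V] (X : SC V) (k : ℕ)
    (hk : 1 ≤ k) (hkn : k ≤ Fintype.card V) (hpure : X.Pure k)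
    (hskel : ∀ F : Finset V, F.card ≤ k → F ∈ X.faces)
    (hmin : lambdaMin (adjCompl X k) < 0) :
    (k : ℝ) * (1 + ((k : ℝ) + 1) *
        ((univ.filter fun H : Finset V => H.card = k + 1 ∧ H ∉ X.faces).card : ℝ) /
        (-(((Fintype.card V).choose k : ℕ) : ℝ) * lambdaMin (adjCompl X k))) ≤
      theta X k :=
  theta_lower_bound_complement_general X k hkn hmin
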